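/- arXiv:2305.07408 — 4 statements merged into one kernel-verified Lean document; each statement's English description precedes it below -/
import Mathlib

section
/- Let L be a compact positive semi-definite self-adjoint operator on a real separable Hilbert space with ‖L‖ ≤ C*, let θ > 0, let l ≤ k, and let γ_l, …, γ_k ∈ [0, 1/C*]. Then ‖L^θ π_l^k(L)‖ ≤ sqrt( ((θ/e)^{2θ} + C*^{2θ}) / (1 + (∑_{j=l}^k γ_j)^{2θ}) ). -/
open scoped RealInnerProductSpace

/-!
In the eigenbasis of `L` the operator `L^θ π_l^k(L)` is diagonal with entries
`p(ω) = ω^θ ∏ (1 - γ_i ω)` for eigenvalues `0 ≤ ω ≤ C*`, so its norm is bounded by `sup |p|`.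
Each factor lies in `[0, 1]` and below `exp (-γ_i ω)`, whence `p(ω) ≤ C*^θ` and, writing
`G = ∑ γ_i`, `p(ω) G^θ ≤ (ωG)^θ e^{-ωG} ≤ (θ/e)^θ`. Squaring and adding the two bounds gives
`p(ω)^2 (1 + G^{2θ}) ≤ (θ/e)^{2θ} + C*^{2θ}`.
-/

namespace HilbertBasis

variable {ι 𝕜 E : Type*} [RCLike 𝕜] [NormedAddCommGroup E] [InnerProductSpace 𝕜 E]
  (b : HilbertBasis ι 𝕜 E) {T : E →L[𝕜] E} {μ : ι → 𝕜}

theorem repr_apply_of_apply_eq_smul (hT : ∀ j, T (b j) = μ j • b j) (x : E) (i : ι) :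
    b.repr (T x) i = μ i * b.repr x i := by
  classical
  have h : (innerSL 𝕜 (b i)).comp T = μ i • innerSL 𝕜 (b i) := by
    refine ContinuousLinearMap.ext_on
      (Submodule.dense_iff_topologicalClosure_eq_top.2 b.dense_span) ?_
    rintro _ ⟨j, rfl⟩
    simp only [ContinuousLinearMap.comp_apply, innerSL_apply_apply, hT, inner_smul_right,
      smul_apply, smul_eq_mul, orthonormal_iff_ite.1 b.orthonormal]
    split_ifs with hij
    · rw [hij]
    · simp
  simpa only [b.repr_apply_apply, ContinuousLinearMap.comp_apply, innerSL_apply_apply,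
    smul_apply, smul_eq_mul] using congr($h x)

theorem opNorm_le_of_apply_eq_smul (hT : ∀ j, T (b j) = μ j • b j) {c : ℝ} (hc : 0 ≤ c)
    (hμ : ∀ j, ‖μ j‖ ≤ c) : ‖T‖ ≤ c := by
  refine T.opNorm_le_bound hc fun x => ?_
  have hp : (0 : ℝ) < (2 : ENNReal).toReal := by norm_num
  rw [← b.repr.norm_map, ← b.repr.norm_map x]
  refine lp.norm_le_of_tsum_le hp (by positivity) ?_
  have hsum := (lp.memℓp (b.repr x)).summable hp
  calc ∑' i, ‖b.repr (T x) i‖ ^ (2 : ENNReal).toReal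
      ≤ ∑' i, c ^ (2 : ENNReal).toReal * ‖b.repr x i‖ ^ (2 : ENNReal).toReal := by
        refine ((lp.memℓp (b.repr (T x))).summable hp).tsum_le_tsum (fun i => ?_)
          (hsum.mul_left _)
        rw [b.repr_apply_of_apply_eq_smul hT, norm_mul, Real.mul_rpow (norm_nonneg _)
          (norm_nonneg _)]
        gcongr
        exact hμ i
    _ = (c * ‖b.repr x‖) ^ (2 : ENNReal).toReal := by
        rw [tsum_mul_left, ← lp.norm_rpow_eq_tsum hp, Real.mul_rpow hc (norm_nonneg _)]

end HilbertBasis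

namespace ContinuousLinearMap

theorem list_prod_map_apply_of_apply_eq_smul {R M ι : Type*} [CommSemiring R]
    [TopologicalSpace M] [AddCommMonoid M] [Module R M] {v : M}
    (f : ι → M →L[R] M) (g : ι → R) (hfg : ∀ i, f i v = g i • v) (s : List ι) :
    (s.map f).prod v = (s.map g).prod • v := by
  induction s with
  | nil => simp
  | cons a t ih =>
    rw [List.map_cons, List.map_cons, List.prod_cons, List.prod_cons,
      mul_apply_eq_comp, ih, map_smul, hfg, smul_smul, mul_comm]

theorem one_sub_smul_apply_of_apply_eq_smul {R M : Type*} [CommRing R] [TopologicalSpace M]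
    [AddCommGroup M] [Module R M] [IsTopologicalAddGroup M] [ContinuousConstSMul R M]
    {L : M →L[R] M} {v : M} {c : R} (hv : L v = c • v) (a : R) :
    (1 - a • L) v = (1 - a * c) • v := by
  simp [hv, sub_smul, smul_smul]

end ContinuousLinearMap

theorem Finset.prod_Icc_eq_list_prod_range' {M : Type*} [CommMonoid M] (f : ℕ → M) (l k : ℕ) :
    ∏ i ∈ Finset.Icc l k, f i = ((List.range' l (k + 1 - l)).map f).prod := by
  rw [Finset.prod, Nat.Icc_eq_range']
  simp

theorem Finset.prod_one_sub_le_exp_neg_sum {ι : Type*} (s : Finset ι) {a : ι → ℝ}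
    (ha : ∀ i ∈ s, a i ≤ 1) : ∏ i ∈ s, (1 - a i) ≤ Real.exp (-∑ i ∈ s, a i) := by
  rw [← Finset.sum_neg_distrib, Real.exp_sum]
  exact Finset.prod_le_prod (fun i hi => sub_nonneg.2 (ha i hi))
    fun i _ => Real.one_sub_le_exp_neg (a i)

theorem Real.rpow_mul_exp_neg_le {θ t : ℝ} (hθ : 0 < θ) (ht : 0 ≤ t) :
    t ^ θ * exp (-t) ≤ (θ / exp 1) ^ θ := by
  calc t ^ θ * exp (-t) = (θ * (t / θ * exp (-(t / θ)))) ^ θ := by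
        rw [mul_rpow hθ.le (by positivity), mul_rpow (by positivity) (exp_nonneg _),
          ← exp_mul, div_rpow ht hθ.le]
        field_simp
    _ ≤ (θ * exp (-1)) ^ θ := by gcongr; exact mul_exp_neg_le_exp_neg_one _
    _ = (θ / exp 1) ^ θ := by rw [exp_neg, div_eq_mul_inv]

theorem le_sqrt_div_of_le_of_mul_le {μ A B D : ℝ} (hμ : 0 ≤ μ) (hD : 0 ≤ D) (hμB : μ ≤ B)
    (hμD : μ * D ≤ A) : μ ≤ √((A ^ 2 + B ^ 2) / (1 + D ^ 2)) := by
  rw [Real.le_sqrt hμ (by positivity), le_div_iff₀ (by positivity)]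
  nlinarith [mul_le_mul hμB hμB hμ (hμ.trans hμB), pow_le_pow_left₀ (mul_nonneg hμ hD) hμD 2]

theorem abs_rpow_mul_prod_one_sub_mul_le {ι : Type*} (s : Finset ι) {γ : ι → ℝ} {θ C x : ℝ}
    (hθ : 0 < θ) (hC : 0 < C) (hx : 0 ≤ x) (hxC : x ≤ C)
    (hγ : ∀ i ∈ s, γ i ∈ Set.Icc 0 (1 / C)) :
    |x ^ θ * ∏ i ∈ s, (1 - γ i * x)| ≤
      √(((θ / Real.exp 1) ^ (2 * θ) + C ^ (2 * θ)) / (1 + (∑ i ∈ s, γ i) ^ (2 * θ))) := by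
  set G := ∑ i ∈ s, γ i
  have hG : 0 ≤ G := Finset.sum_nonneg fun i hi => (hγ i hi).1
  have hγx : ∀ i ∈ s, γ i * x ≤ 1 := fun i hi =>
    calc γ i * x ≤ 1 / C * C := mul_le_mul (hγ i hi).2 hxC hx (by positivity)
      _ = 1 := by field_simp
  have hP0 : 0 ≤ ∏ i ∈ s, (1 - γ i * x) :=
    Finset.prod_nonneg fun i hi => sub_nonneg.2 (hγx i hi)
  have hPexp : ∏ i ∈ s, (1 - γ i * x) ≤ Real.exp (-(x * G)) := by
    rw [mul_comm, Finset.sum_mul]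
    exact Finset.prod_one_sub_le_exp_neg_sum s hγx
  have hP1 : ∏ i ∈ s, (1 - γ i * x) ≤ 1 :=
    hPexp.trans (Real.exp_le_one_iff.2 (neg_nonpos.2 (mul_nonneg hx hG)))
  have hsq : ∀ a : ℝ, 0 ≤ a → a ^ (2 * θ) = (a ^ θ) ^ 2 := fun a ha => by
    rw [mul_comm, Real.rpow_mul ha, Real.rpow_two]
  rw [abs_of_nonneg (by positivity), hsq _ (by positivity), hsq _ hC.le, hsq _ hG]
  refine le_sqrt_div_of_le_of_mul_le (by positivity) (by positivity) ?_ ?_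
  · calc x ^ θ * ∏ i ∈ s, (1 - γ i * x) ≤ x ^ θ * 1 := by gcongr
      _ ≤ C ^ θ := by rw [mul_one]; gcongr
  · calc x ^ θ * (∏ i ∈ s, (1 - γ i * x)) * G ^ θ ≤ x ^ θ * Real.exp (-(x * G)) * G ^ θ := by
          gcongr
      _ = (x * G) ^ θ * Real.exp (-(x * G)) := by
          rw [Real.mul_rpow hx hG]; ring
      _ ≤ (θ / Real.exp 1) ^ θ := Real.rpow_mul_exp_neg_le hθ (mul_nonneg hx hG)

theorem stmt3_general {H : Type*} [NormedAddCommGroup H] [InnerProductSpace ℝ H]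
    (L Lθ : H →L[ℝ] H)
    (e : HilbertBasis ℕ ℝ H) (ω : ℕ → ℝ) (hω : ∀ j, 0 ≤ ω j)
    (hdiag : ∀ j, L (e j) = ω j • e j)
    (θ Cstar : ℝ) (hθ : 0 < θ) (hC : 0 < Cstar) (hLnorm : ‖L‖ ≤ Cstar)
    (hLθ : ∀ j, Lθ (e j) = ω j ^ θ • e j)
    (γ : ℕ → ℝ) (l k : ℕ)
    (hγ : ∀ i, l ≤ i → i ≤ k → γ i ∈ Set.Icc (0 : ℝ) (1 / Cstar)) :
    ‖Lθ * ((List.range' l (k + 1 - l)).map (fun i => (1 : H →L[ℝ] H) - γ i • L)).prod‖ ≤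
      Real.sqrt (((θ / Real.exp 1) ^ (2 * θ) + Cstar ^ (2 * θ)) /
        (1 + (∑ j ∈ Finset.Icc l k, γ j) ^ (2 * θ))) := by
  have hωC : ∀ j, ω j ≤ Cstar := fun j => by
    have := L.le_opNorm (e j)
    rw [hdiag, norm_smul, e.orthonormal.1 j, Real.norm_of_nonneg (hω j), mul_one, mul_one]
      at this
    linarith
  have hT : ∀ j, (Lθ * ((List.range' l (k + 1 - l)).map (fun i => 1 - γ i • L)).prod) (e j) =
      (ω j ^ θ * ∏ i ∈ Finset.Icc l k, (1 - γ i * ω j)) • e j := fun j => by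
    rw [mul_apply_eq_comp, ContinuousLinearMap.list_prod_map_apply_of_apply_eq_smul _ _
      fun i => ContinuousLinearMap.one_sub_smul_apply_of_apply_eq_smul (hdiag j) (γ i),
      map_smul, hLθ, smul_smul, Finset.prod_Icc_eq_list_prod_range', mul_comm]
  refine e.opNorm_le_of_apply_eq_smul hT (Real.sqrt_nonneg _) fun j => ?_
  exact abs_rpow_mul_prod_one_sub_mul_le _ hθ hC (hω j) (hωC j) fun i hi =>
    hγ i (Finset.mem_Icc.1 hi).1 (Finset.mem_Icc.1 hi).2

/-- Let `L` be a compact positive semi-definite self-adjoint operator on a real separable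
Hilbert space with `‖L‖ ≤ C*`, diagonalized by a Hilbert basis `e` with nonnegative
eigenvalues `ω`, and let `Lθ = L^θ` (defined spectrally, `θ > 0`). For `l ≤ k` and
stepsizes `γ_l, …, γ_k ∈ [0, 1/C*]`,
`‖L^θ π_l^k(L)‖ ≤ sqrt(((θ/e)^{2θ} + C*^{2θ}) / (1 + (∑_{j=l}^k γ_j)^{2θ}))`. -/
theorem stmt3 {H : Type*} [NormedAddCommGroup H] [InnerProductSpace ℝ H]
    [CompleteSpace H] [TopologicalSpace.SeparableSpace H]
    (L Lθ : H →L[ℝ] H) (hLcompact : IsCompactOperator L)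
    (hLsa : IsSelfAdjoint L) (hLpos : ∀ x : H, 0 ≤ ⟪L x, x⟫)
    (e : HilbertBasis ℕ ℝ H) (ω : ℕ → ℝ) (hω : ∀ j, 0 ≤ ω j)
    (hdiag : ∀ j, L (e j) = ω j • e j)
    (θ Cstar : ℝ) (hθ : 0 < θ) (hC : 0 < Cstar) (hLnorm : ‖L‖ ≤ Cstar)
    (hLθ : ∀ j, Lθ (e j) = ω j ^ θ • e j)
    (γ : ℕ → ℝ) (l k : ℕ) (hlk : l ≤ k)
    (hγ : ∀ i, l ≤ i → i ≤ k → γ i ∈ Set.Icc (0 : ℝ) (1 / Cstar)) :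
    ‖Lθ * ((List.range' l (k + 1 - l)).map (fun i => (1 : H →L[ℝ] H) - γ i • L)).prod‖ ≤
      Real.sqrt (((θ / Real.exp 1) ^ (2 * θ) + Cstar ^ (2 * θ)) /
        (1 + (∑ j ∈ Finset.Icc l k, γ j) ^ (2 * θ))) :=
  stmt3_general L Lθ e ω hω hdiag θ Cstar hθ hC hLnorm hLθ γ l k hγ
end

section
/- Let T be a compact positive semi-definite self-adjoint operator of trace class on a separable Hilbert space with eigenvalues ω_1 ≥ ω_2 ≥ ⋯ ≥ 0. Suppose there are constants c > 0 and r > 1/2 such that ω_k ≤ c k^{−2r} for all k ≥ 1. Then there exists a constant c' > 0 such that the effective dimension N(λ) = Tr((λI + T)^{−1} T) = ∑_k ω_k/(λ + ω_k) satisfies N(λ) ≤ c' λ^{−1/(2r)} for all λ > 0. -/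
open Finset intervalIntegral Real

lemma tail_rpow_summable {p : ℝ} (hp : p < -1) (K : ℕ) :
    Summable (fun j : ℕ => ((j : ℝ) + K + 1) ^ p) := by
  have h := (Real.summable_one_div_nat_add_rpow ((K : ℝ) + 1) (-p)).2 (by linarith)
  refine h.congr fun j => ?_
  have hx : (0 : ℝ) < (j : ℝ) + ((K : ℝ) + 1) := by positivity
  rw [abs_of_pos hx, one_div, ← Real.rpow_neg hx.le, neg_neg]
  ring_nf

lemma tail_rpow_bound {p : ℝ} (hp : p < -1) {K : ℕ} (hK : 0 < K) :
    ∑' j : ℕ, ((j : ℝ) + K + 1) ^ p ≤ (K : ℝ) ^ (p + 1) / (-(p + 1)) := by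
  have hK0 : (0 : ℝ) < K := by exact_mod_cast hK
  have hterm : ∀ j : ℕ, (0 : ℝ) ≤ ((j : ℝ) + K + 1) ^ p := fun j =>
    Real.rpow_nonneg (by positivity) p
  apply Real.tsum_le_of_sum_range_le hterm
  intro n
  have hanti : AntitoneOn (fun x : ℝ => x ^ p) (Set.Icc (K : ℝ) ((K : ℝ) + n)) := by
    intro x hx y hy hxy
    exact Real.rpow_le_rpow_of_nonpos (lt_of_lt_of_le hK0 hx.1) hxy (by linarith)
  have hsum := hanti.sum_le_integral
  have hint : ∫ x in (K : ℝ)..(K : ℝ) + n, x ^ p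
      = (((K : ℝ) + n) ^ (p + 1) - (K : ℝ) ^ (p + 1)) / (p + 1) := by
    apply integral_rpow
    right
    constructor
    · intro h; rw [h] at hp; linarith
    · rw [Set.uIcc_of_le (le_add_of_nonneg_right (Nat.cast_nonneg n))]
      intro h
      exact absurd (Set.mem_Icc.1 h).1 (by push_neg; exact hK0)
  calc ∑ i ∈ range n, ((i : ℝ) + K + 1) ^ p
      = ∑ i ∈ range n, (fun x : ℝ => x ^ p) ((K : ℝ) + ((i : ℕ) + 1 : ℕ)) := by
        apply Finset.sum_congr rfl; intro i _; push_cast; ring_nf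
    _ ≤ ∫ x in (K : ℝ)..(K : ℝ) + n, x ^ p := hsum
    _ = (((K : ℝ) + n) ^ (p + 1) - (K : ℝ) ^ (p + 1)) / (p + 1) := hint
    _ ≤ (K : ℝ) ^ (p + 1) / (-(p + 1)) := by
        have hA : (0:ℝ) ≤ ((K : ℝ) + n) ^ (p + 1) := Real.rpow_nonneg (by positivity) _
        have heq : ((K : ℝ) ^ (p + 1) - ((K : ℝ) + n) ^ (p + 1)) / (-(p + 1))
            = (((K : ℝ) + n) ^ (p + 1) - (K : ℝ) ^ (p + 1)) / (p + 1) := by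
          rw [div_neg, ← neg_div, neg_sub]
        rw [← heq]
        gcongr
        · linarith
        · linarith


/-- Let `T` be a (trace-class) compact positive self-adjoint operator with eigenvalues
`ω_1 ≥ ω_2 ≥ ⋯ ≥ 0` (here represented by the summable antitone nonnegative sequence
of its eigenvalues). If `ω_k ≤ c k^{−2r}` for some `c > 0` and `r > 1/2`, then there is
`c' > 0` with `N(λ) = ∑_k ω_k/(λ+ω_k) ≤ c' λ^{−1/(2r)}` for all `λ > 0`. -/
theorem stmt8 (ω : ℕ → ℝ) (hωnn : ∀ k, 0 ≤ ω k) (hωmono : Antitone ω)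
    (hωsum : Summable ω) (c r : ℝ) (hc : 0 < c) (hr : 1 / 2 < r)
    (hdecay : ∀ k : ℕ, ω k ≤ c * ((k : ℝ) + 1) ^ (-(2 * r))) :
    ∃ c' > (0 : ℝ), ∀ lam : ℝ, 0 < lam →
      (∑' k, ω k / (lam + ω k)) ≤ c' * lam ^ (-(1 / (2 * r))) := by
  have h2r : (1 : ℝ) < 2 * r := by linarith
  set p : ℝ := -(2 * r) with hpdef
  have hp : p < -1 := by simp only [hpdef]; linarith
  set q : ℝ := -(1 / (2 * r)) with hqdef
  have hq_neg : q < 0 := by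
    have : 0 < 1 / (2 * r) := by positivity
    simp only [hqdef]; linarith
  set S : ℝ := ∑' k, ω k with hSdef
  have hS : 0 ≤ S := tsum_nonneg hωnn
  have hcr : 0 < c / (2 * r - 1) := div_pos hc (by linarith)
  refine ⟨S + 2 + c / (2 * r - 1), by linarith, ?_⟩
  intro lam hlam
  have hlamq : 0 < lam ^ q := Real.rpow_pos_of_pos hlam q
  -- summability of the terms
  have hfnn : ∀ k, 0 ≤ ω k / (lam + ω k) := fun k =>
    div_nonneg (hωnn k) (by have := hωnn k; linarith)
  have hfle : ∀ k, ω k / (lam + ω k) ≤ ω k / lam := by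
    intro k
    have h := hωnn k
    gcongr <;> linarith
  have hfsum : Summable (fun k => ω k / (lam + ω k)) :=
    Summable.of_nonneg_of_le hfnn hfle (hωsum.div_const lam)
  rcases le_or_gt 1 lam with hlam1 | hlam1
  · -- large lambda: N(λ) ≤ S/λ ≤ S λ^q
    have h1 : (∑' k, ω k / (lam + ω k)) ≤ S / lam := by
      rw [hSdef, ← tsum_div_const]
      exact Summable.tsum_le_tsum hfle hfsum (hωsum.div_const lam)
    have h2 : S / lam ≤ S * lam ^ q := by
      rw [div_eq_mul_inv, ← Real.rpow_neg_one lam]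
      exact mul_le_mul_of_nonneg_left
        (Real.rpow_le_rpow_of_exponent_le hlam1 (by
          have h1r : 1 / (2 * r) ≤ 1 := by
            rw [div_le_one (by linarith)]; linarith
          simp only [hqdef]; linarith)) hS
    refine h1.trans (h2.trans ?_)
    have : S ≤ S + 2 + c / (2 * r - 1) := by linarith
    exact mul_le_mul_of_nonneg_right this hlamq.le
  · -- small lambda
    set K : ℕ := ⌈lam ^ q⌉₊ with hKdef
    have hlamq1 : 1 ≤ lam ^ q := by
      rw [show (1:ℝ) = lam ^ (0:ℝ) by rw [Real.rpow_zero]]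
      exact Real.rpow_le_rpow_of_exponent_ge hlam hlam1.le hq_neg.le
    have hK1 : 1 ≤ K := Nat.one_le_ceil_iff.2 (by linarith)
    have hKge : lam ^ q ≤ (K : ℝ) := Nat.le_ceil _
    have hKle : (K : ℝ) ≤ 2 * lam ^ q := by
      have h := Nat.ceil_lt_add_one (le_of_lt hlamq)
      simp only [hKdef]
      linarith
    have hK0 : (0 : ℝ) < K := by exact_mod_cast hK1
    -- split the sum
    have hsplit := Summable.sum_add_tsum_nat_add K hfsum
    have hhead : ∑ i ∈ range K, ω i / (lam + ω i) ≤ (K : ℝ) := by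
      calc ∑ i ∈ range K, ω i / (lam + ω i) ≤ ∑ i ∈ range K, 1 := by
            apply Finset.sum_le_sum
            intro i _
            rw [div_le_one (by have := hωnn i; linarith)]
            have := hωnn i; linarith
        _ = (K : ℝ) := by simp
    have htail : (∑' j, ω (j + K) / (lam + ω (j + K)))
        ≤ (c / lam) * ((K : ℝ) ^ (p + 1) / (-(p + 1))) := by
      have hgsum : Summable (fun j : ℕ => (c / lam) * ((j : ℝ) + K + 1) ^ p) :=
        (tail_rpow_summable hp K).mul_left _
      have hle : ∀ j : ℕ, ω (j + K) / (lam + ω (j + K)) ≤ (c / lam) * ((j : ℝ) + K + 1) ^ p := by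
        intro j
        have h1 : ω (j + K) / (lam + ω (j + K)) ≤ ω (j + K) / lam := hfle (j + K)
        have h2 : ω (j + K) ≤ c * ((j : ℝ) + K + 1) ^ p := by
          have := hdecay (j + K)
          push_cast at this
          convert this using 3 <;> ring
        calc ω (j + K) / (lam + ω (j + K)) ≤ ω (j + K) / lam := h1
          _ ≤ (c * ((j : ℝ) + K + 1) ^ p) / lam := by
              gcongr
          _ = (c / lam) * ((j : ℝ) + K + 1) ^ p := by ring
      calc (∑' j, ω (j + K) / (lam + ω (j + K)))
          ≤ ∑' j : ℕ, (c / lam) * ((j : ℝ) + K + 1) ^ p := by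
            apply Summable.tsum_le_tsum hle _ hgsum
            exact Summable.of_nonneg_of_le (fun j => hfnn (j + K)) hle hgsum
        _ = (c / lam) * ∑' j : ℕ, ((j : ℝ) + K + 1) ^ p := tsum_mul_left
        _ ≤ (c / lam) * ((K : ℝ) ^ (p + 1) / (-(p + 1))) := by
            apply mul_le_mul_of_nonneg_left (tail_rpow_bound hp hK1) (by positivity)
    -- bound K^(p+1)
    have hKp : (K : ℝ) ^ (p + 1) ≤ lam * lam ^ q := by
      have h1 : (K : ℝ) ^ (p + 1) ≤ (lam ^ q) ^ (p + 1) :=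
        Real.rpow_le_rpow_of_nonpos (by positivity) hKge (by linarith)
      have h2 : (lam ^ q) ^ (p + 1) = lam ^ (q * (p + 1)) :=
        (Real.rpow_mul hlam.le q (p + 1)).symm
      have h3 : q * (p + 1) = 1 + q := by
        simp only [hqdef, hpdef]
        field_simp
        ring
      rw [h2, h3, Real.rpow_add hlam, Real.rpow_one] at h1
      exact h1
    have hfinal : (c / lam) * ((K : ℝ) ^ (p + 1) / (-(p + 1)))
        ≤ (c / (2 * r - 1)) * lam ^ q := by
      have hnp : -(p + 1) = 2 * r - 1 := by simp only [hpdef]; ring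
      rw [hnp]
      calc (c / lam) * ((K : ℝ) ^ (p + 1) / (2 * r - 1))
          ≤ (c / lam) * ((lam * lam ^ q) / (2 * r - 1)) := by
            apply mul_le_mul_of_nonneg_left _ (by positivity)
            gcongr
        _ = c * lam ^ q * (lam / lam) / (2 * r - 1) := by ring
        _ = (c / (2 * r - 1)) * lam ^ q := by rw [div_self (ne_of_gt hlam)]; ring
    calc (∑' k, ω k / (lam + ω k))
        = ∑ i ∈ range K, ω i / (lam + ω i) + ∑' j, ω (j + K) / (lam + ω (j + K)) :=
          hsplit.symm
      _ ≤ (K : ℝ) + (c / lam) * ((K : ℝ) ^ (p + 1) / (-(p + 1))) := add_le_add hhead htail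
      _ ≤ 2 * lam ^ q + (c / (2 * r - 1)) * lam ^ q := add_le_add hKle hfinal
      _ ≤ (S + 2 + c / (2 * r - 1)) * lam ^ q := by nlinarith
end

section
/- Let β* satisfy L_K^{−1/2}β* = T_{C,K}^θ g* for some θ > 0 and g* ∈ L²(Ω), where T_{C,K} = L_K^{1/2}L_C L_K^{1/2} with ‖T_{C,K}‖ ≤ C*. Let β_0 = 0 and β_{k+1} = β_k − γ_k L_K L_C (β_k − β*) with γ_k = γ/(k+1)^μ, 0 ≤ μ < 1, 0 < γ ≤ 1/C*. Then for every k ≥ 1, ‖L_K^{−1/2}(β_k − β*)‖_{L²(Ω)} ≤ C_{θ,γ} ‖g*‖_{L²(Ω)} k^{−θ(1−μ)}, where C_{θ,γ} = sqrt((θ/e)^{2θ} + C*^{2θ}) (2/γ)^θ. -/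
open scoped RealInnerProductSpace ENNReal

set_option maxHeartbeats 1000000
set_option synthInstance.maxHeartbeats 400000

lemma tpow_exp_le {θ : ℝ} (hθ : 0 < θ) (t : ℝ) (ht : 0 ≤ t) :
    t ^ θ * Real.exp (-t) ≤ θ ^ θ * Real.exp (-θ) := by
  rcases eq_or_lt_of_le ht with h | h
  · rw [← h, Real.zero_rpow hθ.ne', zero_mul]
    positivity
  · rw [Real.rpow_def_of_pos h, Real.rpow_def_of_pos hθ, ← Real.exp_add, ← Real.exp_add,
      Real.exp_le_exp]
    have hlog : Real.log (t / θ) ≤ t / θ - 1 := Real.log_le_sub_one_of_pos (by positivity)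
    have hld : Real.log (t / θ) = Real.log t - Real.log θ := Real.log_div h.ne' hθ.ne'
    nlinarith [mul_le_mul_of_nonneg_right hlog hθ.le, div_mul_cancel₀ t hθ.ne']

lemma spec_bound {H : Type*} [NormedAddCommGroup H] [InnerProductSpace ℝ H]
    [CompleteSpace H] (e : HilbertBasis ℕ ℝ H) (P : H →L[ℝ] H) (c : ℕ → ℝ)
    (hc : ∀ j, P (e j) = c j • e j) (M : ℝ) (hM : 0 ≤ M) (hcM : ∀ j, |c j| ≤ M)
    (x : H) : ‖P x‖ ≤ M * ‖x‖ := by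
  classical
  set f : lp (fun _ : ℕ => ℝ) 2 := e.repr x with hf
  have h2 : (0:ℝ) < (2 : ℝ≥0∞).toReal := by norm_num
  have hfsum : Summable fun j => ‖f j‖ ^ (2 : ℝ) := by
    simpa using (lp.memℓp f).summable h2
  have hmem : Memℓp (fun j => c j * f j) 2 := by
    apply memℓp_gen
    have hsum2 : Summable fun j => M ^ (2:ℝ) * ‖f j‖ ^ (2:ℝ) := hfsum.mul_left _
    refine Summable.of_nonneg_of_le (fun j => by positivity) (fun j => ?_) hsum2
    have h1 : ‖c j * f j‖ ≤ M * ‖f j‖ := by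
      rw [norm_mul]
      exact mul_le_mul_of_nonneg_right (hcM j) (norm_nonneg _)
    calc ‖c j * f j‖ ^ (2 : ℝ≥0∞).toReal = ‖c j * f j‖ ^ (2:ℝ) := by norm_num
      _ ≤ (M * ‖f j‖) ^ (2:ℝ) := by
          apply Real.rpow_le_rpow (norm_nonneg _) h1 (by norm_num)
      _ = M ^ (2:ℝ) * ‖f j‖ ^ (2:ℝ) := Real.mul_rpow hM (norm_nonneg _)
  set g : lp (fun _ : ℕ => ℝ) 2 := ⟨fun j => c j * f j, hmem⟩ with hg
  have h1 : HasSum (fun j => f j • e j) x := e.hasSum_repr x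
  have hPx : HasSum (fun j => (c j * f j) • e j) (P x) := by
    have := h1.mapL P
    simpa [hc, smul_smul, mul_comm] using this
  have h3 : HasSum (fun j => g j • e j) (e.repr.symm g) := e.hasSum_repr_symm g
  have hPg : P x = e.repr.symm g := hPx.unique h3
  have hne : ‖P x‖ = ‖g‖ := by rw [hPg, LinearIsometryEquiv.norm_map]
  have hxe : ‖x‖ = ‖f‖ := by rw [hf, LinearIsometryEquiv.norm_map]
  rw [hne, hxe]
  have hgn : ‖g‖ ^ (2:ℝ) = ∑' j, ‖g j‖ ^ (2:ℝ) := by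
    simpa using lp.norm_rpow_eq_tsum h2 g
  have hfn : ‖f‖ ^ (2:ℝ) = ∑' j, ‖f j‖ ^ (2:ℝ) := by
    simpa using lp.norm_rpow_eq_tsum h2 f
  have key : ‖g‖ ^ (2:ℝ) ≤ (M * ‖f‖) ^ (2:ℝ) := by
    rw [hgn, Real.mul_rpow hM (norm_nonneg _), hfn, ← tsum_mul_left]
    apply Summable.tsum_le_tsum _ ((lp.memℓp g).summable h2 |>.congr (by intro j; norm_num))
      (hfsum.mul_left _)
    intro j
    have hj : ‖g j‖ ≤ M * ‖f j‖ := by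
      show ‖c j * f j‖ ≤ M * ‖f j‖
      rw [norm_mul]; exact mul_le_mul_of_nonneg_right (hcM j) (norm_nonneg _)
    calc ‖g j‖ ^ (2:ℝ) ≤ (M * ‖f j‖) ^ (2:ℝ) :=
          Real.rpow_le_rpow (norm_nonneg _) hj (by norm_num)
      _ = M ^ (2:ℝ) * ‖f j‖ ^ (2:ℝ) := Real.mul_rpow hM (norm_nonneg _)
  have key' : ‖g‖ ^ (2:ℕ) ≤ (M * ‖f‖) ^ (2:ℕ) := by
    have h := key
    rw [show ((2:ℝ)) = ((2:ℕ):ℝ) by norm_num, Real.rpow_natCast, Real.rpow_natCast] at h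
    exact h
  exact (pow_le_pow_iff_left₀ (norm_nonneg _) (by positivity) two_ne_zero).mp key'

/-- Iterated operator product `∏_{i<n} G i` (left to right). -/
def opProd {H : Type*} [NormedAddCommGroup H] [InnerProductSpace ℝ H]
    (G : ℕ → (H →L[ℝ] H)) : ℕ → (H →L[ℝ] H)
  | 0 => 1
  | (n + 1) => opProd G n * G n

/-- Data-free gradient descent: with `L_K^{−1/2}β* = T_{C,K}^θ g*` (`θ > 0`),
`T_{C,K} = L_K^{1/2}L_C L_K^{1/2}`, `‖T_{C,K}‖ ≤ C*`, `β_0 = 0`,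
`β_{k+1} = β_k − γ_k L_K L_C(β_k − β*)`, `γ_k = γ/(k+1)^μ`, `0 ≤ μ < 1`,
`0 < γ ≤ 1/C*`: for every `k ≥ 1`,
`‖L_K^{−1/2}(β_k − β*)‖ ≤ C_{θ,γ} ‖g*‖ k^{−θ(1−μ)}`, where
`C_{θ,γ} = sqrt((θ/e)^{2θ} + C*^{2θ})(2/γ)^θ`.
Here `S = L_K^{1/2}` (injective), `T^θ = Tθ` is defined spectrally via the
diagonalizing Hilbert basis `e`, and `b k = L_K^{−1/2}β_k` is encoded by
`S (b k) = β k` (so `L_K^{−1/2}β* = Tθ g*` is encoded by `S (Tθ g*) = β*`). -/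
theorem stmt18 {H : Type*} [NormedAddCommGroup H] [InnerProductSpace ℝ H]
    [CompleteSpace H]
    (LK LC S T Tθ : H →L[ℝ] H)
    (hSS : S * S = LK) (hSsa : IsSelfAdjoint S) (hSpos : ∀ f : H, 0 ≤ ⟪S f, f⟫)
    (hSinj : Function.Injective S)
    (hLCsa : IsSelfAdjoint LC) (hLCpos : ∀ f : H, 0 ≤ ⟪LC f, f⟫)
    (hT : T = S * LC * S)
    (Cstar : ℝ) (hCstar : 0 < Cstar) (hTn : ‖T‖ ≤ Cstar)
    (e : HilbertBasis ℕ ℝ H) (ω : ℕ → ℝ) (hω : ∀ j, 0 ≤ ω j)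
    (hdiag : ∀ j, T (e j) = ω j • e j)
    (θ : ℝ) (hθ : 0 < θ) (hTθ : ∀ j, Tθ (e j) = ω j ^ θ • e j)
    (gstar βstar : H) (hreg : S (Tθ gstar) = βstar)
    (γ μ : ℝ) (hμ0 : 0 ≤ μ) (hμ1 : μ < 1) (hγ0 : 0 < γ) (hγ : γ ≤ 1 / Cstar)
    (β b : ℕ → H) (hβ0 : β 0 = 0)
    (hβ : ∀ k, β (k + 1) = β k - (γ / ((k : ℝ) + 1) ^ μ) • LK (LC (β k - βstar)))
    (hb : ∀ k, S (b k) = β k) :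
    ∀ k : ℕ, 1 ≤ k →
      ‖b k - Tθ gstar‖ ≤
        Real.sqrt ((θ / Real.exp 1) ^ (2 * θ) + Cstar ^ (2 * θ)) * (2 / γ) ^ θ *
          ‖gstar‖ * (k : ℝ) ^ (-(θ * (1 - μ))) := by
  intro k hk
  set γs : ℕ → ℝ := fun i => γ / ((i : ℝ) + 1) ^ μ with hγs
  set G : ℕ → (H →L[ℝ] H) := fun i => 1 - γs i • T with hG
  -- commutation
  have hcomm : ∀ a b : ℝ, Commute ((1 : H →L[ℝ] H) - a • T) (1 - b • T) := by
    intro a b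
    exact ((Commute.one_left _).sub_left
      (((Commute.one_right _).sub_right (((Commute.refl T).smul_left a).smul_right b))))
  have hQcomm : ∀ n m : ℕ, Commute (G m) (opProd G n) := by
    intro n m
    induction n with
    | zero => exact Commute.one_right _
    | succ n ih => exact ih.mul_right (hcomm _ _)
  -- diagonal action of factors
  have hGe : ∀ i j, G i (e j) = (1 - γs i * ω j) • e j := by
    intro i j
    simp only [hG, ContinuousLinearMap.sub_apply, ContinuousLinearMap.one_apply,
      ContinuousLinearMap.smul_apply, hdiag, smul_smul, sub_smul, one_smul]
  have hQe : ∀ n j, opProd G n (e j) =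
      (∏ i ∈ Finset.range n, (1 - γs i * ω j)) • e j := by
    intro n j
    induction n with
    | zero => simp [opProd]
    | succ n ih =>
      rw [opProd, ContinuousLinearMap.mul_apply, hGe, map_smul, ih,
        Finset.prod_range_succ, smul_smul, mul_comm]
  -- recurrence for b
  have hbrec : ∀ n, b (n + 1) = b n - γs n • T (b n - Tθ gstar) := by
    intro n
    apply hSinj
    have hv : S (b n - Tθ gstar) = β n - βstar := by rw [map_sub, hb, hreg]
    have key : S (b n - γs n • T (b n - Tθ gstar)) = β n - γs n • LK (LC (β n - βstar)) := by
      rw [map_sub, map_smul, hb]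
      congr 1
      congr 1
      rw [hT]
      calc S ((S * LC * S) (b n - Tθ gstar)) = (S * S) (LC (S (b n - Tθ gstar))) := rfl
        _ = LK (LC (β n - βstar)) := by rw [hSS, hv]
    rw [hb, hβ, key]
  have hb0 : b 0 = 0 := by
    apply hSinj; rw [hb, hβ0, map_zero]
  -- closed form
  have hclosed : ∀ n, b n - Tθ gstar = opProd G n (b 0 - Tθ gstar) := by
    intro n
    induction n with
    | zero => simp [opProd]
    | succ n ih =>
      rw [hbrec]
      calc b n - γs n • T (b n - Tθ gstar) - Tθ gstar
          = (b n - Tθ gstar) - γs n • T (b n - Tθ gstar) := by abel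
        _ = G n (b n - Tθ gstar) := by
            simp [hG, ContinuousLinearMap.sub_apply, ContinuousLinearMap.smul_apply,
              ContinuousLinearMap.one_apply]
        _ = G n (opProd G n (b 0 - Tθ gstar)) := by rw [ih]
        _ = (G n * opProd G n) (b 0 - Tθ gstar) := rfl
        _ = (opProd G (n + 1)) (b 0 - Tθ gstar) := by rw [opProd, ← hQcomm n n]
  -- scalar estimates
  have hEnorm : ∀ j, ‖(e j : H)‖ = 1 := fun j => e.orthonormal.1 j
  have hωC : ∀ j, ω j ≤ Cstar := by
    intro j
    have h1 : ω j = ⟪T (e j), e j⟫ := by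
      rw [hdiag j, real_inner_smul_left, real_inner_self_eq_norm_sq, hEnorm]; ring
    have h2 := real_inner_le_norm (T (e j)) (e j)
    have h3 := T.le_opNorm (e j)
    rw [hEnorm j] at h2 h3
    rw [h1]
    nlinarith
  have hγspos : ∀ i, 0 < γs i := by
    intro i
    have : (0:ℝ) < ((i : ℝ) + 1) ^ μ := Real.rpow_pos_of_pos (by positivity) μ
    positivity
  have hγsγ : ∀ i, γs i ≤ γ := by
    intro i
    have h1 : (1:ℝ) ≤ ((i : ℝ) + 1) ^ μ :=
      Real.one_le_rpow (by have := Nat.cast_nonneg (α := ℝ) i; linarith) hμ0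
    calc γs i = γ / ((i : ℝ) + 1) ^ μ := rfl
      _ ≤ γ / 1 := by
          apply div_le_div_of_nonneg_left hγ0.le one_pos h1 |>.trans_eq (div_one γ) |>.trans_eq (div_one γ).symm
      _ = γ := div_one γ
  have hγω1 : ∀ i j, γs i * ω j ≤ 1 := by
    intro i j
    calc γs i * ω j ≤ (1 / Cstar) * Cstar := by
          apply mul_le_mul (le_trans (hγsγ i) hγ) (hωC j) (hω j) (by positivity)
      _ = 1 := by field_simp
  have hfac0 : ∀ i j, 0 ≤ 1 - γs i * ω j := fun i j => sub_nonneg.mpr (hγω1 i j)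
  set A : ℝ := ∑ i ∈ Finset.range k, γs i with hAdef
  have hk1 : (1:ℝ) ≤ (k : ℝ) := by exact_mod_cast hk
  have hkpos : (0:ℝ) < (k : ℝ) := by linarith
  have hA : γ * (k : ℝ) ^ (1 - μ) ≤ A := by
    have each : ∀ i ∈ Finset.range k, γ / (k : ℝ) ^ μ ≤ γs i := by
      intro i hi
      have hik : (i : ℝ) + 1 ≤ (k : ℝ) := by
        have := Finset.mem_range.mp hi
        exact_mod_cast Nat.succ_le_of_lt this
      have : ((i : ℝ) + 1) ^ μ ≤ (k : ℝ) ^ μ :=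
        Real.rpow_le_rpow (by positivity) hik hμ0
      show γ / (k : ℝ) ^ μ ≤ γ / ((i : ℝ) + 1) ^ μ
      exact div_le_div_of_nonneg_left hγ0.le (Real.rpow_pos_of_pos (by positivity) μ) this
    have hsum := Finset.card_nsmul_le_sum (Finset.range k) γs (γ / (k : ℝ) ^ μ) each
    rw [Finset.card_range, nsmul_eq_mul] at hsum
    have heq : γ * (k : ℝ) ^ (1 - μ) = (k : ℝ) * (γ / (k : ℝ) ^ μ) := by
      rw [Real.rpow_sub hkpos, Real.rpow_one]
      ring
    rw [heq]
    exact hsum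
  have hApos : (0:ℝ) < A :=
    lt_of_lt_of_le (mul_pos hγ0 (Real.rpow_pos_of_pos hkpos _)) hA
  -- the diagonal operator and its bound
  set c : ℕ → ℝ := fun j => ω j ^ θ * ∏ i ∈ Finset.range k, (1 - γs i * ω j) with hcdef
  set P : H →L[ℝ] H := opProd G k * Tθ with hP
  have hPe : ∀ j, P (e j) = c j • e j := by
    intro j
    rw [hP, ContinuousLinearMap.mul_apply, hTθ, map_smul, hQe, smul_smul]
  set M : ℝ := θ ^ θ * Real.exp (-θ) / A ^ θ with hM
  have hAθ : (0:ℝ) < A ^ θ := Real.rpow_pos_of_pos hApos θ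
  have hMnn : 0 ≤ M := by positivity
  have hcM : ∀ j, |c j| ≤ M := by
    intro j
    have hcnn : 0 ≤ c j := by
      apply mul_nonneg (Real.rpow_nonneg (hω j) θ)
      exact Finset.prod_nonneg fun i _ => hfac0 i j
    rw [abs_of_nonneg hcnn]
    have hprod : (∏ i ∈ Finset.range k, (1 - γs i * ω j)) ≤ Real.exp (-(ω j * A)) := by
      have hsum_eq : ∑ i ∈ Finset.range k, -(γs i * ω j) = -(ω j * A) := by
        rw [hAdef, Finset.mul_sum, ← Finset.sum_neg_distrib]
        exact Finset.sum_congr rfl fun i _ => by ring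
      calc (∏ i ∈ Finset.range k, (1 - γs i * ω j))
          ≤ ∏ i ∈ Finset.range k, Real.exp (-(γs i * ω j)) := by
            apply Finset.prod_le_prod (fun i _ => hfac0 i j)
            intro i _
            linarith [Real.add_one_le_exp (-(γs i * ω j))]
        _ = Real.exp (∑ i ∈ Finset.range k, -(γs i * ω j)) := (Real.exp_sum _ _).symm
        _ = Real.exp (-(ω j * A)) := by rw [hsum_eq]
    calc c j ≤ ω j ^ θ * Real.exp (-(ω j * A)) := by
          apply mul_le_mul_of_nonneg_left hprod (Real.rpow_nonneg (hω j) θ)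
      _ ≤ M := by
          rw [hM, le_div_iff₀ hAθ]
          calc ω j ^ θ * Real.exp (-(ω j * A)) * A ^ θ
              = (ω j * A) ^ θ * Real.exp (-(ω j * A)) := by
                rw [Real.mul_rpow (hω j) hApos.le]; ring
            _ ≤ θ ^ θ * Real.exp (-θ) := tpow_exp_le hθ _ (mul_nonneg (hω j) hApos.le)
  -- norm bound
  have hnorm : ‖b k - Tθ gstar‖ = ‖P gstar‖ := by
    rw [hclosed k, hb0, zero_sub, map_neg, norm_neg]
    rfl
  have hmain : ‖b k - Tθ gstar‖ ≤ M * ‖gstar‖ := by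
    rw [hnorm]
    exact spec_bound e P c hPe M hMnn hcM gstar
  -- final arithmetic
  have hstep1 : (θ / Real.exp 1) ^ θ ≤
      Real.sqrt ((θ / Real.exp 1) ^ (2 * θ) + Cstar ^ (2 * θ)) := by
    have hbnn : (0:ℝ) ≤ θ / Real.exp 1 := by positivity
    apply Real.le_sqrt_of_sq_le
    have hsq : ((θ / Real.exp 1) ^ θ) ^ (2:ℕ) = (θ / Real.exp 1) ^ (2 * θ) := by
      rw [← Real.rpow_natCast ((θ / Real.exp 1) ^ θ) 2, ← Real.rpow_mul hbnn]
      norm_num [mul_comm]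
    rw [hsq]
    have hC2 : (0:ℝ) ≤ Cstar ^ (2 * θ) := Real.rpow_nonneg hCstar.le _
    linarith
  have hMeq : M = (θ / Real.exp 1) ^ θ * A ^ (-θ) := by
    rw [hM, Real.div_rpow hθ.le (Real.exp_pos 1).le, Real.exp_one_rpow,
      Real.exp_neg, Real.rpow_neg hApos.le]
    field_simp
  have hstep2 : A ^ (-θ) ≤ (2 / γ) ^ θ * (k : ℝ) ^ (-(θ * (1 - μ))) := by
    have h1 : A ^ (-θ) ≤ (γ * (k : ℝ) ^ (1 - μ)) ^ (-θ) :=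
      Real.rpow_le_rpow_of_nonpos
        (mul_pos hγ0 (Real.rpow_pos_of_pos hkpos _)) hA (neg_nonpos.mpr hθ.le)
    have h2 : (γ * (k : ℝ) ^ (1 - μ)) ^ (-θ)
        = γ ^ (-θ) * (k : ℝ) ^ (-(θ * (1 - μ))) := by
      rw [Real.mul_rpow hγ0.le (Real.rpow_nonneg hkpos.le _), ← Real.rpow_mul hkpos.le]
      congr 1
      ring
    have h3 : γ ^ (-θ) ≤ (2 / γ) ^ θ := by
      have hinv : γ ^ (-θ) = (γ⁻¹) ^ θ := by
        rw [Real.rpow_neg hγ0.le, ← Real.inv_rpow hγ0.le]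
      rw [hinv]
      apply Real.rpow_le_rpow (by positivity) _ hθ.le
      rw [div_eq_mul_inv]
      have : (0:ℝ) ≤ γ⁻¹ := by positivity
      linarith
    calc A ^ (-θ) ≤ γ ^ (-θ) * (k : ℝ) ^ (-(θ * (1 - μ))) := h1.trans_eq h2
      _ ≤ (2 / γ) ^ θ * (k : ℝ) ^ (-(θ * (1 - μ))) :=
          mul_le_mul_of_nonneg_right h3 (Real.rpow_nonneg hkpos.le _)
  have hMle : M ≤ Real.sqrt ((θ / Real.exp 1) ^ (2 * θ) + Cstar ^ (2 * θ)) *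
      ((2 / γ) ^ θ * (k : ℝ) ^ (-(θ * (1 - μ)))) := by
    rw [hMeq]
    exact mul_le_mul hstep1 hstep2 (Real.rpow_nonneg hApos.le _) (Real.sqrt_nonneg _)
  calc ‖b k - Tθ gstar‖ ≤ M * ‖gstar‖ := hmain
    _ ≤ (Real.sqrt ((θ / Real.exp 1) ^ (2 * θ) + Cstar ^ (2 * θ)) *
        ((2 / γ) ^ θ * (k : ℝ) ^ (-(θ * (1 - μ))))) * ‖gstar‖ :=
          mul_le_mul_of_nonneg_right hMle (norm_nonneg _)
    _ = Real.sqrt ((θ / Real.exp 1) ^ (2 * θ) + Cstar ^ (2 * θ)) * (2 / γ) ^ θ *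
        ‖gstar‖ * (k : ℝ) ^ (-(θ * (1 - μ))) := by ring
end

section
/- Under the same setting, with β_0 = 0, β_{k+1} = β_k − γ_k L_K L_C(β_k − β*), γ_k = γ/(k+1)^μ, 0 ≤ μ < 1, 0 < γ ≤ 1/C*, and L_K^{−1/2}β* = T_{C,K}^θ g* with θ ≥ 0: for every k ≥ 1, ‖T_{C,K}^{1/2} L_K^{−1/2}(β_k − β*)‖_{L²(Ω)} ≤ C_{θ+1/2,γ} ‖g*‖_{L²(Ω)} k^{−(θ+1/2)(1−μ)}, where C_{θ+1/2,γ} = sqrt(((θ+1/2)/e)^{2θ+1} + C*^{2θ+1}) (2/γ)^{θ+1/2}. -/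
open scoped RealInnerProductSpace

section Stmt19Aux
variable {H : Type*} [NormedAddCommGroup H] [InnerProductSpace ℝ H] [CompleteSpace H]

omit [CompleteSpace H] in
lemma stmt19_diag_inner (e : HilbertBasis ℕ ℝ H) (A : H →L[ℝ] H) (f : ℕ → ℝ)
    (hA : ∀ j, A (e j) = f j • e j) (j : ℕ) (x : H) :
    ⟪e j, A x⟫ = f j * ⟪e j, x⟫ := by
  have key : (innerSL ℝ (e j)).comp A = f j • innerSL ℝ (e j) := by
    have hdense : Dense (Submodule.span ℝ (Set.range (e : ℕ → H)) : Set H) :=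
      Submodule.dense_iff_topologicalClosure_eq_top.mpr e.dense_span
    refine ContinuousLinearMap.ext_on hdense ?_
    rintro _ ⟨i, rfl⟩
    have horth := orthonormal_iff_ite.mp e.orthonormal j i
    simp only [ContinuousLinearMap.comp_apply, ContinuousLinearMap.smul_apply,
      innerSL_apply_apply, hA i, real_inner_smul_right, smul_eq_mul, horth]
    rcases eq_or_ne j i with rfl | hji
    · simp
    · simp [if_neg hji]
  have h2 := DFunLike.congr_fun key x
  simpa using h2

omit [CompleteSpace H] in
lemma stmt19_norm_le_of_coord (e : HilbertBasis ℕ ℝ H) (M : ℝ) (hM : 0 ≤ M) (y z : H)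
    (h : ∀ j, |⟪e j, y⟫| ≤ M * |⟪e j, z⟫|) : ‖y‖ ≤ M * ‖z‖ := by
  have hy : HasSum (fun i => ⟪e i, y⟫ ^ 2) (‖y‖ ^ 2) := by
    have h0 := e.hasSum_inner_mul_inner y y
    rw [real_inner_self_eq_norm_sq] at h0
    simpa [real_inner_comm, sq] using h0
  have hz : HasSum (fun i => ⟪e i, z⟫ ^ 2) (‖z‖ ^ 2) := by
    have h0 := e.hasSum_inner_mul_inner z z
    rw [real_inner_self_eq_norm_sq] at h0
    simpa [real_inner_comm, sq] using h0
  have hle : ‖y‖ ^ 2 ≤ M ^ 2 * ‖z‖ ^ 2 := by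
    refine hasSum_le (fun i => ?_) hy (hz.mul_left (M ^ 2))
    calc ⟪e i, y⟫ ^ 2 = |⟪e i, y⟫| ^ 2 := (sq_abs _).symm
      _ ≤ (M * |⟪e i, z⟫|) ^ 2 := pow_le_pow_left₀ (abs_nonneg _) (h i) 2
      _ = M ^ 2 * ⟪e i, z⟫ ^ 2 := by rw [mul_pow, sq_abs]
  have : ‖y‖ ^ 2 ≤ (M * ‖z‖) ^ 2 := by rw [mul_pow]; exact hle
  exact (pow_le_pow_iff_left₀ (norm_nonneg _) (by positivity) two_ne_zero).mp this

end Stmt19Aux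

lemma stmt19_fac_nonneg (Cstar γ μ : ℝ) (hCstar : 0 < Cstar) (hμ0 : 0 ≤ μ)
    (hγ0 : 0 < γ) (hγ : γ ≤ 1 / Cstar) (x : ℝ) (hx0 : 0 ≤ x) (hxC : x ≤ Cstar) (i : ℕ) :
    γ / ((i : ℝ) + 1) ^ μ * x ≤ 1 := by
  have h1 : (1 : ℝ) ≤ ((i : ℝ) + 1) ^ μ := by
    have := Real.rpow_le_rpow (le_of_lt one_pos)
      (by have : (0:ℝ) ≤ (i : ℝ) := Nat.cast_nonneg i; linarith : (1:ℝ) ≤ (i : ℝ) + 1) hμ0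
    simpa using this
  have h2 : γ / ((i : ℝ) + 1) ^ μ ≤ γ := by
    calc γ / ((i : ℝ) + 1) ^ μ ≤ γ / 1 := by
          apply div_le_div_of_nonneg_left hγ0.le one_pos h1
      _ = γ := div_one γ
  calc γ / ((i : ℝ) + 1) ^ μ * x ≤ γ * Cstar := mul_le_mul h2 hxC hx0 hγ0.le
    _ ≤ (1 / Cstar) * Cstar := by nlinarith
    _ = 1 := by field_simp

lemma stmt19_poly_exp (r Sg x : ℝ) (hr : 0 < r) (hSg : 0 < Sg) (hx : 0 ≤ x) :
    x ^ r * Real.exp (-(Sg * x)) ≤ (r / (Real.exp 1 * Sg)) ^ r := by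
  have hu : (Sg * x / r) * Real.exp (-(Sg * x / r)) ≤ Real.exp (-1) := by
    set u := Sg * x / r with hu_def
    have h2 : u ≤ Real.exp (u - 1) := by
      have := Real.add_one_le_exp (u - 1); linarith
    have h3 : u * Real.exp (-u) ≤ Real.exp (u - 1) * Real.exp (-u) :=
      mul_le_mul_of_nonneg_right h2 (Real.exp_pos _).le
    rwa [← Real.exp_add, show u - 1 + -u = -1 by ring] at h3
  have h1 : x * Real.exp (-(Sg * x / r)) ≤ r / (Real.exp 1 * Sg) := by
    have hxid : (r / Sg) * (Sg * x / r) = x := by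
      field_simp
    have hstep : x * Real.exp (-(Sg * x / r))
        = (r / Sg) * ((Sg * x / r) * Real.exp (-(Sg * x / r))) := by
      rw [← mul_assoc, hxid]
    rw [hstep]
    calc (r / Sg) * ((Sg * x / r) * Real.exp (-(Sg * x / r)))
        ≤ (r / Sg) * Real.exp (-1) := mul_le_mul_of_nonneg_left hu (by positivity)
      _ = r / (Real.exp 1 * Sg) := by
          rw [Real.exp_neg 1]
          field_simp
  calc x ^ r * Real.exp (-(Sg * x))
      = (x * Real.exp (-(Sg * x / r))) ^ r := by
        rw [Real.mul_rpow hx (Real.exp_nonneg _), ← Real.exp_mul]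
        congr 2
        field_simp
    _ ≤ (r / (Real.exp 1 * Sg)) ^ r := Real.rpow_le_rpow (by positivity) h1 hr.le

lemma stmt19_scalar (Cstar γ μ θ : ℝ) (hCstar : 0 < Cstar) (hθ : 0 ≤ θ)
    (hμ0 : 0 ≤ μ) (hμ1 : μ < 1) (hγ0 : 0 < γ) (hγ : γ ≤ 1 / Cstar)
    (k : ℕ) (hk : 1 ≤ k) (x : ℝ) (hx0 : 0 ≤ x) (hxC : x ≤ Cstar) :
    x ^ (θ + 1 / 2) * ∏ i ∈ Finset.range k, (1 - γ / ((i : ℝ) + 1) ^ μ * x) ≤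
      Real.sqrt (((θ + 1 / 2) / Real.exp 1) ^ (2 * θ + 1) + Cstar ^ (2 * θ + 1)) *
        (2 / γ) ^ (θ + 1 / 2) * (k : ℝ) ^ (-((θ + 1 / 2) * (1 - μ))) := by
  set r : ℝ := θ + 1 / 2 with hr_def
  have hr : 0 < r := by positivity
  have hkR : (1 : ℝ) ≤ (k : ℝ) := by exact_mod_cast hk
  have hkpos : (0 : ℝ) < (k : ℝ) := lt_of_lt_of_le one_pos hkR
  have hgi_pos : ∀ i : ℕ, 0 < γ / ((i : ℝ) + 1) ^ μ := fun i => by positivity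
  have hgi_le : ∀ i : ℕ, γ / ((i : ℝ) + 1) ^ μ * x ≤ 1 :=
    fun i => stmt19_fac_nonneg Cstar γ μ hCstar hμ0 hγ0 hγ x hx0 hxC i
  set Sg : ℝ := ∑ i ∈ Finset.range k, γ / ((i : ℝ) + 1) ^ μ with hSg_def
  have hSg_lb : γ * (k : ℝ) ^ (1 - μ) ≤ Sg := by
    have hterm : ∀ i ∈ Finset.range k, γ / (k : ℝ) ^ μ ≤ γ / ((i : ℝ) + 1) ^ μ := by
      intro i hi
      have hik : (i : ℝ) + 1 ≤ (k : ℝ) := by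
        have := Finset.mem_range.mp hi; exact_mod_cast Nat.succ_le_of_lt this
      apply div_le_div_of_nonneg_left hγ0.le (by positivity)
      exact Real.rpow_le_rpow (by positivity) hik hμ0
    calc γ * (k : ℝ) ^ (1 - μ) = (k : ℝ) * (γ / (k : ℝ) ^ μ) := by
          rw [Real.rpow_sub hkpos, Real.rpow_one]; field_simp
      _ ≤ Sg := by
          have := Finset.card_nsmul_le_sum (Finset.range k)
            (fun i => γ / ((i : ℝ) + 1) ^ μ) (γ / (k : ℝ) ^ μ) hterm
          simpa [nsmul_eq_mul] using this
  have hSg_pos : 0 < Sg := lt_of_lt_of_le (by positivity) hSg_lb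
  have hprod : ∏ i ∈ Finset.range k, (1 - γ / ((i : ℝ) + 1) ^ μ * x) ≤ Real.exp (-(Sg * x)) := by
    have : ∏ i ∈ Finset.range k, (1 - γ / ((i : ℝ) + 1) ^ μ * x) ≤
        ∏ i ∈ Finset.range k, Real.exp (-(γ / ((i : ℝ) + 1) ^ μ * x)) := by
      apply Finset.prod_le_prod
      · intro i _; linarith [hgi_le i]
      · intro i _
        have := Real.add_one_le_exp (-(γ / ((i : ℝ) + 1) ^ μ * x)); linarith
    rw [← Real.exp_sum] at this
    convert this using 2
    rw [hSg_def, Finset.sum_mul]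
    simp [neg_mul, Finset.sum_neg_distrib]
  have hmain : x ^ r * ∏ i ∈ Finset.range k, (1 - γ / ((i : ℝ) + 1) ^ μ * x) ≤
      (r / (Real.exp 1 * (γ * (k : ℝ) ^ (1 - μ)))) ^ r := by
    calc x ^ r * ∏ i ∈ Finset.range k, (1 - γ / ((i : ℝ) + 1) ^ μ * x)
        ≤ x ^ r * Real.exp (-(Sg * x)) := by
          apply mul_le_mul_of_nonneg_left hprod (by positivity)
      _ ≤ (r / (Real.exp 1 * Sg)) ^ r := stmt19_poly_exp r Sg x hr hSg_pos hx0
      _ ≤ (r / (Real.exp 1 * (γ * (k : ℝ) ^ (1 - μ)))) ^ r := by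
          apply Real.rpow_le_rpow (by positivity) ?_ hr.le
          apply div_le_div_of_nonneg_left hr.le (by positivity)
          exact mul_le_mul_of_nonneg_left hSg_lb (Real.exp_pos 1).le
  refine hmain.trans ?_
  have hsplit : (r / (Real.exp 1 * (γ * (k : ℝ) ^ (1 - μ)))) ^ r
      = (r / Real.exp 1) ^ r * (1 / γ) ^ r * ((k : ℝ) ^ (1 - μ)) ^ (-r) := by
    have hbase : r / (Real.exp 1 * (γ * (k : ℝ) ^ (1 - μ)))
        = (r / Real.exp 1) * (1 / γ) * ((k : ℝ) ^ (1 - μ))⁻¹ := by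
      field_simp
    rw [hbase, Real.mul_rpow (by positivity) (by positivity),
      Real.mul_rpow (by positivity) (by positivity),
      Real.inv_rpow (by positivity), ← Real.rpow_neg (by positivity)]
  rw [hsplit]
  have h1 : (r / Real.exp 1) ^ r ≤
      Real.sqrt ((r / Real.exp 1) ^ (2 * θ + 1) + Cstar ^ (2 * θ + 1)) := by
    have h2r : (2 : ℝ) * θ + 1 = r * 2 := by rw [hr_def]; ring
    have hsq : (r / Real.exp 1) ^ (2 * θ + 1) = ((r / Real.exp 1) ^ r) ^ (2 : ℕ) := by
      rw [h2r, ← Real.rpow_natCast ((r / Real.exp 1) ^ r) 2, ← Real.rpow_mul (by positivity)]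
      norm_num
    calc (r / Real.exp 1) ^ r = Real.sqrt (((r / Real.exp 1) ^ r) ^ (2 : ℕ)) := by
          rw [Real.sqrt_sq (by positivity)]
      _ ≤ _ := by
          apply Real.sqrt_le_sqrt
          rw [hsq]
          have : (0:ℝ) ≤ Cstar ^ (2 * θ + 1) := by positivity
          linarith
  have h2 : (1 / γ) ^ r ≤ (2 / γ) ^ r := by
    apply Real.rpow_le_rpow (by positivity) ((div_le_div_iff_of_pos_right hγ0).mpr one_le_two) hr.le
  have h3 : ((k : ℝ) ^ (1 - μ)) ^ (-r) = (k : ℝ) ^ (-(r * (1 - μ))) := by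
    rw [← Real.rpow_mul hkpos.le]
    congr 1; ring
  rw [h3]
  have hk3 : (0:ℝ) ≤ (k : ℝ) ^ (-(r * (1 - μ))) := by positivity
  apply mul_le_mul_of_nonneg_right _ hk3
  exact mul_le_mul h1 h2 (by positivity) (by positivity)

/-- Same data-free gradient descent setting, now with `θ ≥ 0`: for every `k ≥ 1`,
`‖T_{C,K}^{1/2} L_K^{−1/2}(β_k − β*)‖ ≤ C_{θ+1/2,γ} ‖g*‖ k^{−(θ+1/2)(1−μ)}`, where
`C_{θ+1/2,γ} = sqrt(((θ+1/2)/e)^{2θ+1} + C*^{2θ+1})(2/γ)^{θ+1/2}`.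
Here `S = L_K^{1/2}` (injective), `T = S L_C S` with `‖T‖ ≤ C*`, and `T^θ = Tθ`,
`T^{1/2} = Thalf` are defined spectrally via the diagonalizing Hilbert basis `e`;
`b k = L_K^{−1/2}β_k` is encoded by `S (b k) = β k`. -/
theorem stmt19 {H : Type*} [NormedAddCommGroup H] [InnerProductSpace ℝ H]
    [CompleteSpace H]
    (LK LC S T Tθ Thalf : H →L[ℝ] H)
    (hSS : S * S = LK) (hSsa : IsSelfAdjoint S) (hSpos : ∀ f : H, 0 ≤ ⟪S f, f⟫)
    (hSinj : Function.Injective S)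
    (hLCsa : IsSelfAdjoint LC) (hLCpos : ∀ f : H, 0 ≤ ⟪LC f, f⟫)
    (hT : T = S * LC * S)
    (Cstar : ℝ) (hCstar : 0 < Cstar) (hTn : ‖T‖ ≤ Cstar)
    (e : HilbertBasis ℕ ℝ H) (ω : ℕ → ℝ) (hω : ∀ j, 0 ≤ ω j)
    (hdiag : ∀ j, T (e j) = ω j • e j)
    (θ : ℝ) (hθ : 0 ≤ θ) (hTθ : ∀ j, Tθ (e j) = ω j ^ θ • e j)
    (hThalf : ∀ j, Thalf (e j) = ω j ^ ((1 : ℝ) / 2) • e j)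
    (gstar βstar : H) (hreg : S (Tθ gstar) = βstar)
    (γ μ : ℝ) (hμ0 : 0 ≤ μ) (hμ1 : μ < 1) (hγ0 : 0 < γ) (hγ : γ ≤ 1 / Cstar)
    (β b : ℕ → H) (hβ0 : β 0 = 0)
    (hβ : ∀ k, β (k + 1) = β k - (γ / ((k : ℝ) + 1) ^ μ) • LK (LC (β k - βstar)))
    (hb : ∀ k, S (b k) = β k) :
    ∀ k : ℕ, 1 ≤ k →
      ‖Thalf (b k - Tθ gstar)‖ ≤
        Real.sqrt (((θ + 1 / 2) / Real.exp 1) ^ (2 * θ + 1) + Cstar ^ (2 * θ + 1)) *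
          (2 / γ) ^ (θ + 1 / 2) * ‖gstar‖ * (k : ℝ) ^ (-((θ + 1 / 2) * (1 - μ))) := by
  intro k hk
  have hb0 : b 0 = 0 := hSinj (by rw [hb, hβ0, map_zero])
  have hrec : ∀ n : ℕ, b (n + 1) = b n - (γ / ((n : ℝ) + 1) ^ μ) • T (b n - Tθ gstar) := by
    intro n
    apply hSinj
    rw [map_sub, map_smul, hb, hb, hβ]
    congr 1
    have hsub : β n - βstar = S (b n - Tθ gstar) := by rw [map_sub, hb, hreg]
    rw [hsub, ← hSS, hT]
    simp [ContinuousLinearMap.mul_apply]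
  -- coordinate recursion
  have hcrec : ∀ (n : ℕ) (j : ℕ), ⟪e j, b (n + 1) - Tθ gstar⟫
      = (1 - γ / ((n : ℝ) + 1) ^ μ * ω j) * ⟪e j, b n - Tθ gstar⟫ := by
    intro n j
    rw [hrec n, sub_right_comm, inner_sub_right, real_inner_smul_right,
      stmt19_diag_inner e T ω hdiag j]
    ring
  have hcform : ∀ (n : ℕ) (j : ℕ), ⟪e j, b n - Tθ gstar⟫
      = (∏ i ∈ Finset.range n, (1 - γ / ((i : ℝ) + 1) ^ μ * ω j)) *
          (-(ω j ^ θ * ⟪e j, gstar⟫)) := by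
    intro n j
    induction n with
    | zero =>
        simp [hb0, zero_sub, inner_neg_right,
          stmt19_diag_inner e Tθ (fun j => ω j ^ θ) hTθ j]
    | succ n ih => rw [hcrec n j, ih, Finset.prod_range_succ]; ring
  -- eigenvalues bounded by Cstar
  have hωC : ∀ j, ω j ≤ Cstar := by
    intro j
    have hne : ‖(e : ℕ → H) j‖ = 1 := e.orthonormal.1 j
    have h1 : ⟪e j, T (e j)⟫ = ω j := by
      rw [hdiag j, real_inner_smul_right, real_inner_self_eq_norm_sq, hne]
      norm_num
    rw [← h1]
    calc ⟪e j, T (e j)⟫ ≤ ‖(e : ℕ → H) j‖ * ‖T (e j)‖ := real_inner_le_norm _ _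
      _ ≤ ‖(e : ℕ → H) j‖ * (‖T‖ * ‖(e : ℕ → H) j‖) :=
          mul_le_mul_of_nonneg_left (T.le_opNorm _) (norm_nonneg _)
      _ = ‖T‖ := by rw [hne]; ring
      _ ≤ Cstar := hTn
  set M := Real.sqrt (((θ + 1 / 2) / Real.exp 1) ^ (2 * θ + 1) + Cstar ^ (2 * θ + 1)) *
      (2 / γ) ^ (θ + 1 / 2) * (k : ℝ) ^ (-((θ + 1 / 2) * (1 - μ))) with hM_def
  have hM0 : 0 ≤ M := by positivity
  have hcoord : ∀ j, |⟪e j, Thalf (b k - Tθ gstar)⟫| ≤ M * |⟪e j, gstar⟫| := by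
    intro j
    have hprod_nonneg : 0 ≤ ∏ i ∈ Finset.range k, (1 - γ / ((i : ℝ) + 1) ^ μ * ω j) := by
      apply Finset.prod_nonneg
      intro i _
      have := stmt19_fac_nonneg Cstar γ μ hCstar hμ0 hγ0 hγ (ω j) (hω j) (hωC j) i
      linarith
    rw [stmt19_diag_inner e Thalf (fun j => ω j ^ ((1 : ℝ) / 2)) hThalf j, hcform k j]
    have habs : |ω j ^ ((1 : ℝ) / 2) *
        ((∏ i ∈ Finset.range k, (1 - γ / ((i : ℝ) + 1) ^ μ * ω j)) *
          (-(ω j ^ θ * ⟪e j, gstar⟫)))|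
        = (ω j ^ (θ + 1 / 2) * ∏ i ∈ Finset.range k, (1 - γ / ((i : ℝ) + 1) ^ μ * ω j)) *
          |⟪e j, gstar⟫| := by
      rw [abs_mul, abs_mul, abs_neg, abs_mul,
        abs_of_nonneg (Real.rpow_nonneg (hω j) _), abs_of_nonneg hprod_nonneg,
        abs_of_nonneg (Real.rpow_nonneg (hω j) _),
        Real.rpow_add' (hω j) (by positivity : θ + 1 / 2 ≠ 0)]
      ring
    rw [habs]
    apply mul_le_mul_of_nonneg_right _ (abs_nonneg _)
    exact stmt19_scalar Cstar γ μ θ hCstar hθ hμ0 hμ1 hγ0 hγ k hk (ω j) (hω j) (hωC j)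
  calc ‖Thalf (b k - Tθ gstar)‖ ≤ M * ‖gstar‖ :=
        stmt19_norm_le_of_coord e M hM0 _ gstar hcoord
    _ = Real.sqrt (((θ + 1 / 2) / Real.exp 1) ^ (2 * θ + 1) + Cstar ^ (2 * θ + 1)) *
          (2 / γ) ^ (θ + 1 / 2) * ‖gstar‖ * (k : ℝ) ^ (-((θ + 1 / 2) * (1 - μ))) := by
        rw [hM_def]; ring
end
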